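/- Fix z ∈ ℂ, d ∈ ℝ, ν ∈ ℤ, and for a real 2×2 matrix g with det g > 0 define Φ_ν(g) = (det g)^d · ( det g / (g₂₁² + g₂₂²) )^{z/2} · ( (g₂₂ - i·g₂₁) / √(g₂₁² + g₂₂²) )^ν. Let H = [[1,0],[0,-1]] and V = [[0,1],[1,0]]. Then for every real 2×2 matrix g with det g > 0, (d/ds)|_{s=0} Φ_ν( g·exp(sH) ) + i · (d/ds)|_{s=0} Φ_ν( g·exp(sV) ) = (z + ν) · Φ_{ν+2}(g), where Φ_{ν+2} is defined by the same formula with ν replaced by ν+2 (and the same z, d). -/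

import Mathlib

/-- The K-finite vector of weight `ν` in the principal series of `GL₂(ℝ)⁺`:
`Φ_ν(g) = (det g)^d · (det g/(g₂₁²+g₂₂²))^{z/2} · ((g₂₂ - i g₂₁)/√(g₂₁²+g₂₂²))^ν`. -/
noncomputable def Phi (z : ℂ) (d : ℝ) (ν : ℤ) (g : Matrix (Fin 2) (Fin 2) ℝ) : ℂ :=
  ((g.det ^ d : ℝ) : ℂ) *
    ((g.det / (g 1 0 ^ 2 + g 1 1 ^ 2) : ℝ) : ℂ) ^ (z / 2) *
    (((g 1 1 : ℂ) - Complex.I * (g 1 0 : ℂ)) /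
        ((Real.sqrt (g 1 0 ^ 2 + g 1 1 ^ 2) : ℝ) : ℂ)) ^ ν

open Complex

/-! For `det g > 0`, `Φ_ν(g)` is a function of `det g` times `n ^ μ * w ^ ν`, where `(c, e)` is
the bottom row of `g`, `n = c² + e²`, `w = e - i c` and `μ = -(z + ν) / 2`. Right translation by
`exp (s H)` and `exp (s V)` fixes the determinant and moves the bottom row with velocities
`(c, -e)` and `(e, c)`. Hence `P₊ w = 0` and `P₊ n = -2 w²`, so
`P₊ (n ^ μ * w ^ ν) = -2 μ n ^ (μ - 1) * w ^ (ν + 2)`, which is the row factor of `Φ_{ν+2}`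
multiplied by `z + ν`. -/

noncomputable def detFactor (z : ℂ) (d t : ℝ) : ℂ := ((t ^ d : ℝ) : ℂ) * (t : ℂ) ^ (z / 2)

noncomputable def rowFactor (z : ℂ) (ν : ℤ) (c e : ℝ) : ℂ :=
  ((c ^ 2 + e ^ 2 : ℝ) : ℂ) ^ (-(z + ν) / 2) * ((e : ℂ) - I * c) ^ ν

lemma sq_add_sq_pos_of_det_pos {g : Matrix (Fin 2) (Fin 2) ℝ} (hg : 0 < g.det) :
    0 < g 1 0 ^ 2 + g 1 1 ^ 2 := by
  rw [Matrix.det_fin_two] at hg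
  by_contra! h
  obtain ⟨h₀, h₁⟩ : g 1 0 = 0 ∧ g 1 1 = 0 := by
    constructor <;> nlinarith [sq_nonneg (g 1 0), sq_nonneg (g 1 1)]
  simp [h₀, h₁] at hg

lemma ofReal_sqrt_zpow {x : ℝ} (hx : 0 ≤ x) (n : ℤ) :
    ((√x : ℝ) : ℂ) ^ n = (x : ℂ) ^ ((n : ℂ) / 2) := by
  rw [Real.sqrt_eq_rpow, ofReal_cpow hx, ← cpow_mul_int]
  push_cast
  ring_nf

lemma Phi_eq_detFactor_mul_rowFactor {z : ℂ} {d : ℝ} {ν : ℤ} {g : Matrix (Fin 2) (Fin 2) ℝ}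
    (hg : 0 < g.det) : Phi z d ν g = detFactor z d g.det * rowFactor z ν (g 1 0) (g 1 1) := by
  have hn := sq_add_sq_pos_of_det_pos hg
  have hn' : ((g 1 0 ^ 2 + g 1 1 ^ 2 : ℝ) : ℂ) ≠ 0 := ofReal_ne_zero.2 hn.ne'
  rw [Phi, detFactor, rowFactor, div_zpow, ofReal_sqrt_zpow hn.le, ofReal_div,
    div_cpow_ofReal_nonneg hg.le hn.le, show -(z + ν) / 2 = -(z / 2 + ν / 2) by ring, cpow_neg,
    cpow_add _ _ hn']
  field_simp

lemma ofReal_sub_I_mul_ne_zero {c e : ℝ} (h : 0 < c ^ 2 + e ^ 2) : (e : ℂ) - I * c ≠ 0 := by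
  intro h0
  have hre := congrArg re h0
  have him := congrArg im h0
  simp only [sub_re, ofReal_re, mul_re, I_re, I_im, ofReal_im, zero_re, sub_im, ofReal_im,
    mul_im, zero_im] at hre him
  nlinarith

noncomputable def rowFactorDeriv (z : ℂ) (ν : ℤ) (c e c' e' : ℝ) : ℂ :=
  -(z + ν) / 2 * ((c ^ 2 + e ^ 2 : ℝ) : ℂ) ^ (-(z + ν) / 2 - 1) * (2 * c * c' + 2 * e * e' : ℝ) *
      ((e : ℂ) - I * c) ^ ν +
    ((c ^ 2 + e ^ 2 : ℝ) : ℂ) ^ (-(z + ν) / 2) * (ν * ((e : ℂ) - I * c) ^ (ν - 1) * (e' - I * c'))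

theorem HasDerivAt.rowFactor {z : ℂ} {ν : ℤ} {c e : ℝ → ℝ} {c' e' s : ℝ}
    (hc : HasDerivAt c c' s) (he : HasDerivAt e e' s) (hpos : 0 < c s ^ 2 + e s ^ 2) :
    HasDerivAt (fun t => rowFactor z ν (c t) (e t)) (rowFactorDeriv z ν (c s) (e s) c' e') s := by
  have hn : HasDerivAt (fun t => c t ^ 2 + e t ^ 2) (2 * c s * c' + 2 * e s * e') s := by
    simpa using (hc.fun_pow 2).fun_add (he.fun_pow 2)
  have hw : HasDerivAt (fun t => (e t : ℂ) - I * c t) (e' - I * c') s :=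
    he.ofReal_comp.sub (hc.ofReal_comp.const_mul I)
  have hnμ := (hasStrictDerivAt_cpow_const (c := -(z + ν) / 2)
    (ofReal_mem_slitPlane.2 hpos)).hasDerivAt.comp s hn.ofReal_comp
  have hwν := (hasDerivAt_zpow ν _ (Or.inl (ofReal_sub_I_mul_ne_zero hpos))).comp s hw
  exact hnμ.mul hwν

lemma rowFactorDeriv_raising {z : ℂ} {ν : ℤ} {c e : ℝ} (hpos : 0 < c ^ 2 + e ^ 2) :
    rowFactorDeriv z ν c e c (-e) + I * rowFactorDeriv z ν c e e c =
      (z + ν) * rowFactor z (ν + 2) c e := by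
  set n : ℂ := ((c ^ 2 + e ^ 2 : ℝ) : ℂ) with hn
  set w : ℂ := (e : ℂ) - I * c with hw
  set μ : ℂ := -(z + ν) / 2 with hμ
  have hn0 : n ≠ 0 := ofReal_ne_zero.2 hpos.ne'
  have hw0 : w ≠ 0 := ofReal_sub_I_mul_ne_zero hpos
  have hnμ : n ^ μ = n ^ (μ - 1) * n := by rw [cpow_sub _ _ hn0, cpow_one, div_mul_cancel₀ _ hn0]
  have hwν : w ^ ν = w ^ (ν - 1) * w := by rw [← zpow_add_one₀ hw0, sub_add_cancel]
  have hwν₂ : w ^ (ν + 2) = w ^ (ν - 1) * w ^ 3 := by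
    rw [← zpow_natCast, ← zpow_add₀ hw0]; congr 1; push_cast; ring
  have hμ₂ : -(z + ((ν + 2 : ℤ) : ℂ)) / 2 = μ - 1 := by rw [hμ]; push_cast; ring
  simp only [rowFactorDeriv, rowFactor, ← hn, ← hw, ← hμ, hμ₂, hnμ, hwν, hwν₂]
  push_cast
  have hz : z + ν = -2 * μ := by rw [hμ]; ring
  linear_combination (2 * μ * n ^ (μ - 1) * w ^ (ν - 1) * w * c ^ 2 -
      n ^ (μ - 1) * n * ν * w ^ (ν - 1) * e) * I_sq +
    2 * μ * n ^ (μ - 1) * w ^ (ν - 1) * w * (w + e - I * c) * hw -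
    n ^ (μ - 1) * w ^ (ν - 1) * w ^ 3 * hz

theorem hasDerivAt_Phi_mul {z : ℂ} {d : ℝ} {ν : ℤ} {g : Matrix (Fin 2) (Fin 2) ℝ}
    {k : ℝ → Matrix (Fin 2) (Fin 2) ℝ} {X : Matrix (Fin 2) (Fin 2) ℝ} (hg : 0 < g.det)
    (hdet : ∀ s, (k s).det = 1) (hk₀ : k 0 = 1)
    (hk : ∀ i j, HasDerivAt (fun s => k s i j) (X i j) 0) :
    HasDerivAt (fun s => Phi z d ν (g * k s))
      (detFactor z d g.det * rowFactorDeriv z ν (g 1 0) (g 1 1) ((g * X) 1 0) ((g * X) 1 1)) 0 := by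
  have hrow (j : Fin 2) : HasDerivAt (fun s => (g * k s) 1 j) ((g * X) 1 j) 0 := by
    simp only [Matrix.mul_apply, Fin.sum_univ_two]
    exact ((hk 0 j).const_mul _).add ((hk 1 j).const_mul _)
  have hPhi : (fun s => Phi z d ν (g * k s)) =
      fun s => detFactor z d g.det * rowFactor z ν ((g * k s) 1 0) ((g * k s) 1 1) := by
    funext s
    rw [Phi_eq_detFactor_mul_rowFactor, Matrix.det_mul, hdet, mul_one]
    rwa [Matrix.det_mul, hdet, mul_one]
  have hpos : 0 < (g * k 0) 1 0 ^ 2 + (g * k 0) 1 1 ^ 2 := by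
    simpa only [hk₀, mul_one] using sq_add_sq_pos_of_det_pos hg
  simpa only [hPhi, hk₀, mul_one] using
    ((hrow 0).rowFactor (hrow 1) hpos).const_mul (detFactor z d g.det)

lemma exp_smul_H (s : ℝ) :
    NormedSpace.exp (s • !![1, 0; 0, -1] : Matrix (Fin 2) (Fin 2) ℝ) =
      !![Real.exp s, 0; 0, Real.exp (-s)] := by
  have hdiag : (s • !![1, 0; 0, -1] : Matrix (Fin 2) (Fin 2) ℝ) = Matrix.diagonal ![s, -s] := by
    ext i j; fin_cases i <;> fin_cases j <;> simp
  rw [hdiag, Matrix.exp_diagonal]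
  ext i j; fin_cases i <;> fin_cases j <;> simp [← Real.exp_eq_exp_ℝ, Pi.exp_def]

lemma exp_smul_V (s : ℝ) :
    NormedSpace.exp (s • !![0, 1; 1, 0] : Matrix (Fin 2) (Fin 2) ℝ) =
      !![Real.cosh s, Real.sinh s; Real.sinh s, Real.cosh s] := by
  set P : Matrix (Fin 2) (Fin 2) ℝ := !![1, 1; 1, -1]
  have hPinv : P⁻¹ = !![1 / 2, 1 / 2; 1 / 2, -(1 / 2)] := by
    refine Matrix.inv_eq_right_inv ?_
    ext i j; fin_cases i <;> fin_cases j <;> norm_num [P, Matrix.mul_apply]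
  have hP : IsUnit P := by
    rw [Matrix.isUnit_iff_isUnit_det, Matrix.det_fin_two_of]; norm_num
  have hconj : (s • !![0, 1; 1, 0] : Matrix (Fin 2) (Fin 2) ℝ) =
      P * (s • !![1, 0; 0, -1]) * P⁻¹ := by
    rw [hPinv]
    ext i j; fin_cases i <;> fin_cases j <;> simp [P, Matrix.mul_apply] <;> ring
  rw [hconj, Matrix.exp_conj _ _ hP, exp_smul_H, hPinv]
  ext i j; fin_cases i <;> fin_cases j <;>
    simp [P, Matrix.mul_apply, Real.cosh_eq, Real.sinh_eq] <;> ring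

theorem hasDerivAt_Phi_mul_exp_smul_H {z : ℂ} {d : ℝ} {ν : ℤ} {g : Matrix (Fin 2) (Fin 2) ℝ}
    (hg : 0 < g.det) :
    HasDerivAt (fun s : ℝ => Phi z d ν (g * NormedSpace.exp (s • !![1, 0; 0, -1])))
      (detFactor z d g.det * rowFactorDeriv z ν (g 1 0) (g 1 1) (g 1 0) (-g 1 1)) 0 := by
  simp only [exp_smul_H]
  convert hasDerivAt_Phi_mul (X := !![1, 0; 0, -1]) hg ?_ ?_ ?_ using 3
  · simp [Matrix.mul_apply]
  · simp [Matrix.mul_apply]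
  · intro s; simp [Matrix.det_fin_two_of, ← Real.exp_add]
  · ext i j; fin_cases i <;> fin_cases j <;> simp
  · intro i j
    fin_cases i <;> fin_cases j <;> simp only [Fin.zero_eta, Fin.mk_one, Matrix.of_apply,
      Matrix.cons_val', Matrix.cons_val_zero, Matrix.cons_val_one, Matrix.empty_val',
      Matrix.cons_val_fin_one]
    · simpa using Real.hasDerivAt_exp 0
    · exact hasDerivAt_const _ _
    · exact hasDerivAt_const _ _
    · simpa using (hasDerivAt_neg (0 : ℝ)).exp

theorem hasDerivAt_Phi_mul_exp_smul_V {z : ℂ} {d : ℝ} {ν : ℤ} {g : Matrix (Fin 2) (Fin 2) ℝ}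
    (hg : 0 < g.det) :
    HasDerivAt (fun s : ℝ => Phi z d ν (g * NormedSpace.exp (s • !![0, 1; 1, 0])))
      (detFactor z d g.det * rowFactorDeriv z ν (g 1 0) (g 1 1) (g 1 1) (g 1 0)) 0 := by
  simp only [exp_smul_V]
  convert hasDerivAt_Phi_mul (X := !![0, 1; 1, 0]) hg ?_ ?_ ?_ using 3
  · simp [Matrix.mul_apply]
  · simp [Matrix.mul_apply]
  · intro s; rw [Matrix.det_fin_two_of, ← Real.cosh_sq_sub_sinh_sq s]; ring
  · ext i j; fin_cases i <;> fin_cases j <;> simp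
  · intro i j
    fin_cases i <;> fin_cases j <;> simp only [Fin.zero_eta, Fin.mk_one, Matrix.of_apply,
      Matrix.cons_val', Matrix.cons_val_zero, Matrix.cons_val_one, Matrix.empty_val',
      Matrix.cons_val_fin_one]
    · simpa using Real.hasDerivAt_cosh 0
    · simpa using Real.hasDerivAt_sinh 0
    · simpa using Real.hasDerivAt_sinh 0
    · simpa using Real.hasDerivAt_cosh 0

/-- The raising operator `P₊ = H + i⊗V` acts on `Φ_ν` by
`(d/ds)|₀ Φ_ν(g·exp(sH)) + i·(d/ds)|₀ Φ_ν(g·exp(sV)) = (z+ν)·Φ_{ν+2}(g)`. -/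
theorem stmt_11 (z : ℂ) (d : ℝ) (ν : ℤ) (g : Matrix (Fin 2) (Fin 2) ℝ) (hg : 0 < g.det) :
    ∃ a b : ℂ,
      HasDerivAt (fun s : ℝ =>
        Phi z d ν (g * NormedSpace.exp (s • (!![1, 0; 0, -1] : Matrix (Fin 2) (Fin 2) ℝ)))) a 0 ∧
      HasDerivAt (fun s : ℝ =>
        Phi z d ν (g * NormedSpace.exp (s • (!![0, 1; 1, 0] : Matrix (Fin 2) (Fin 2) ℝ)))) b 0 ∧
      a + Complex.I * b = (z + (ν : ℂ)) * Phi z d (ν + 2) g := by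
  refine ⟨_, _, hasDerivAt_Phi_mul_exp_smul_H hg, hasDerivAt_Phi_mul_exp_smul_V hg, ?_⟩
  rw [Phi_eq_detFactor_mul_rowFactor hg]
  linear_combination detFactor z d g.det *
    rowFactorDeriv_raising (z := z) (ν := ν) (sq_add_sq_pos_of_det_pos hg)
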